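/- Let u ∈ H²(Ω) be nonzero. The supremum of J(p) = ∫_Ω p u² dxdy over p ∈ P_{α,β} is attained by the bang-bang weight p_u = α χ_S + β χ_{Ω∖S}, where S ⊆ Ω is a measurable set with |S| = ((β−1)/(β−α))|Ω| satisfying {u² < t} ⊆ S ⊆ {u² ≤ t} for a suitable level t ≥ 0; i.e. J(p) ≤ J(p_u) for all p ∈ P_{α,β}. -/

import Mathlib

open MeasureTheory Real Filter Topology
open scoped Classical

noncomputable section

/-- The rectangular plate `Ω = (0,π) × (−ℓ,ℓ)`. -/
def Omega (l : ℝ) : Set (ℝ × ℝ) := Set.Ioo 0 π ×ˢ Set.Ioo (-l) l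

/-- Membership in the admissible weight class `P_{α,β}`:
`p ∈ L^∞(Ω)` with `α ≤ p ≤ β` a.e. in `Ω`, `p(x,y) = p(x,−y)` a.e. in `Ω`,
and total mass `∫_Ω p = |Ω|`. -/
def memP (l α β : ℝ) (p : ℝ × ℝ → ℝ) : Prop :=
  IntegrableOn p (Omega l) ∧
  (∀ᵐ z ∂(volume.restrict (Omega l)), α ≤ p z ∧ p z ≤ β) ∧
  (∀ᵐ z ∂(volume.restrict (Omega l)), p (z.1, -z.2) = p z) ∧
  ∫ z in Omega l, p z = (volume (Omega l)).toReal

/-- The level `t` of the rearrangement lemma: the supremum of `s ≥ 0` such that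
the sublevel set `{u² ≤ s}` in `Ω` has measure `< C`. -/
def levelT (l : ℝ) (u : ℝ × ℝ → ℝ) (C : ℝ) : ℝ :=
  sSup {s : ℝ | 0 ≤ s ∧ (volume {z ∈ Omega l | u z ^ 2 ≤ s}).toReal < C}

/-- Rearrangement lemma (maximization): for nonzero `u`, the supremum of
`J(p) = ∫_Ω p u²` over `P_{α,β}` is attained by the bang–bang weight
`p_u = α χ_S + β χ_{Ω∖S}` for a measurable `S ⊆ Ω` with
`|S| = ((β−1)/(β−α))|Ω|` sandwiched between the sublevel sets of `u²` at
the level `t ≥ 0`. -/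
theorem stmt5 (l α β : ℝ) (hl : 0 < l) (hα : 0 < α) (hα1 : α < 1) (hβ : 1 < β)
    (u : ℝ × ℝ → ℝ) (humeas : Measurable u)
    (hu2 : MemLp u 2 (volume.restrict (Omega l)))
    (hune : ¬ u =ᵐ[volume.restrict (Omega l)] 0)
    (husym : ∀ x y : ℝ, u (x, -y) = u (x, y))
    (S : Set (ℝ × ℝ)) (hSmeas : MeasurableSet S) (hSsub : S ⊆ Omega l)
    (hSsym : ∀ x y : ℝ, (x, y) ∈ S ↔ (x, -y) ∈ S)
    (hSvol : (volume S).toReal = ((β - 1) / (β - α)) * (volume (Omega l)).toReal)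
    (hsand :
      (levelT l u (((β - 1) / (β - α)) * (volume (Omega l)).toReal) = 0 ∧
        S ⊆ {z ∈ Omega l | u z ^ 2 = 0}) ∨
      (0 < levelT l u (((β - 1) / (β - α)) * (volume (Omega l)).toReal) ∧
        {z ∈ Omega l | u z ^ 2 <
          levelT l u (((β - 1) / (β - α)) * (volume (Omega l)).toReal)} ⊆ S ∧
        S ⊆ {z ∈ Omega l | u z ^ 2 ≤
          levelT l u (((β - 1) / (β - α)) * (volume (Omega l)).toReal)})) :
    memP l α β (fun z => if z ∈ S then α else β) ∧
    ∀ p : ℝ × ℝ → ℝ, memP l α β p →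
      ∫ z in Omega l, p z * u z ^ 2 ≤
        ∫ z in Omega l, (if z ∈ S then α else β) * u z ^ 2 := by
  have hΩmeas : MeasurableSet (Omega l) := measurableSet_Ioo.prod measurableSet_Ioo
  have hΩfin : volume (Omega l) ≠ ⊤ := by
    have hb : Bornology.IsBounded (Omega l) :=
      (Metric.isBounded_Ioo 0 π).prod (Metric.isBounded_Ioo (-l) l)
    exact hb.measure_lt_top.ne
  have hSfin : volume S ≠ ⊤ := (lt_of_le_of_lt (measure_mono hSsub) hΩfin.lt_top).ne
  have hβα : β - α ≠ 0 := by linarith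
  set q : ℝ × ℝ → ℝ := fun z => if z ∈ S then α else β with hq
  have hqmeas : Measurable q := Measurable.ite hSmeas measurable_const measurable_const
  have hqbound : ∀ z, α ≤ q z ∧ q z ≤ β := by
    intro z
    by_cases hz : z ∈ S <;> simp [hq, hz] <;> linarith
  have hqint : IntegrableOn q (Omega l) := by
    refine Integrable.mono' (g := fun _ => β) ?_ hqmeas.aestronglyMeasurable ?_
    · exact integrableOn_const hΩfin
    · filter_upwards with z
      rw [Real.norm_eq_abs, abs_of_pos (lt_of_lt_of_le hα (hqbound z).1)]
      exact (hqbound z).2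
  have hu2int : IntegrableOn (fun z => u z ^ 2) (Omega l) := hu2.integrable_sq
  -- the integral of q over Ω
  have hvoldiff : (volume (Omega l \ S)).toReal
      = (volume (Omega l)).toReal - (volume S).toReal := by
    rw [measure_diff hSsub hSmeas.nullMeasurableSet hSfin,
      ENNReal.toReal_sub_of_le (measure_mono hSsub) hΩfin]
  have hqintegral : ∫ z in Omega l, q z = (volume (Omega l)).toReal := by
    have hsplit : Omega l = S ∪ (Omega l \ S) := (Set.union_diff_cancel hSsub).symm
    have hdisj : Disjoint S (Omega l \ S) := Set.disjoint_sdiff_right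
    have hsum : ∫ z in Omega l, q z = (∫ z in S, q z) + ∫ z in (Omega l \ S), q z := by
      rw [← setIntegral_union hdisj (hΩmeas.diff hSmeas) (hqint.mono_set hSsub)
        (hqint.mono_set Set.diff_subset), ← hsplit]
    rw [hsum]
    have h1 : ∫ z in S, q z = (volume S).toReal * α := by
      rw [setIntegral_congr_fun hSmeas (g := fun _ => α) (fun z hz => if_pos hz),
        setIntegral_const, smul_eq_mul, measureReal_def]
    have h2 : ∫ z in Omega l \ S, q z = (volume (Omega l \ S)).toReal * β := by
      rw [setIntegral_congr_fun (hΩmeas.diff hSmeas) (g := fun _ => β)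
        (fun z hz => if_neg hz.2), setIntegral_const, smul_eq_mul, measureReal_def]
    rw [h1, h2, hvoldiff, hSvol]
    field_simp
    ring
  have hqmem : memP l α β q := by
    refine ⟨hqint, ?_, ?_, hqintegral⟩
    · filter_upwards with z using hqbound z
    · filter_upwards with z
      have : (z.1, -z.2) ∈ S ↔ (z.1, z.2) ∈ S := (hSsym z.1 z.2).symm
      simp only [hq]
      rw [if_congr (by simpa using this) rfl rfl]
  refine ⟨hqmem, ?_⟩
  intro p hp
  obtain ⟨hpint, hpb, -, hpintegral⟩ := hp
  set t : ℝ := levelT l u (((β - 1) / (β - α)) * (volume (Omega l)).toReal) with ht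
  -- pointwise inequality a.e. on Ω
  have hpt : ∀ᵐ z ∂(volume.restrict (Omega l)),
      0 ≤ (q z - p z) * (u z ^ 2 - t) := by
    filter_upwards [hpb, ae_restrict_mem hΩmeas] with z hzb hzΩ
    by_cases hzS : z ∈ S
    · have hq1 : q z = α := if_pos hzS
      have hle : u z ^ 2 ≤ t := by
        rcases hsand with ⟨ht0, hsub⟩ | ⟨-, -, hsub⟩
        · exact le_of_eq ((hsub hzS).2.trans ht0.symm)
        · exact (hsub hzS).2
      nlinarith [hzb.1]
    · have hq1 : q z = β := if_neg hzS
      have hle : t ≤ u z ^ 2 := by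
        rcases hsand with ⟨ht0, -⟩ | ⟨-, hsub, -⟩
        · exact ht0.trans_le (sq_nonneg _)
        · by_contra h
          exact hzS (hsub ⟨hzΩ, not_le.1 h⟩)
      nlinarith [hzb.2]
  -- integrability of the products
  have hprod : ∀ (f : ℝ × ℝ → ℝ), IntegrableOn f (Omega l) →
      (∀ᵐ z ∂(volume.restrict (Omega l)), α ≤ f z ∧ f z ≤ β) →
      IntegrableOn (fun z => f z * u z ^ 2) (Omega l) := by
    intro f hfint hfb
    refine Integrable.mono' (g := fun z => β * u z ^ 2) (hu2int.const_mul β)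
      (hfint.aestronglyMeasurable.mul
        ((humeas.pow_const 2).aestronglyMeasurable)) ?_
    filter_upwards [hfb] with z hzb
    rw [Real.norm_eq_abs, abs_mul, abs_of_pos (lt_of_lt_of_le hα hzb.1),
      abs_of_nonneg (sq_nonneg (u z))]
    have : (0:ℝ) ≤ u z ^ 2 := sq_nonneg _
    nlinarith [hzb.2]
  have h1 : IntegrableOn (fun z => q z * u z ^ 2) (Omega l) :=
    hprod q hqint (Filter.Eventually.of_forall hqbound)
  have h2 : IntegrableOn (fun z => p z * u z ^ 2) (Omega l) := hprod p hpint hpb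
  -- integrate the pointwise inequality
  have hkey : 0 ≤ ∫ z in Omega l, (q z - p z) * (u z ^ 2 - t) :=
    integral_nonneg_of_ae hpt
  have hfg : Integrable (fun z => q z * u z ^ 2 - p z * u z ^ 2)
      (volume.restrict (Omega l)) := h1.sub h2
  have hhk : Integrable (fun z => t * q z - t * p z)
      (volume.restrict (Omega l)) := (hqint.const_mul t).sub (hpint.const_mul t)
  have hexpand : ∫ z in Omega l, (q z - p z) * (u z ^ 2 - t)
      = ((∫ z in Omega l, q z * u z ^ 2) - (∫ z in Omega l, p z * u z ^ 2))
        - ((t * ∫ z in Omega l, q z) - t * ∫ z in Omega l, p z) := by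
    calc ∫ z in Omega l, (q z - p z) * (u z ^ 2 - t)
        = ∫ z in Omega l,
            ((q z * u z ^ 2 - p z * u z ^ 2) - (t * q z - t * p z)) := by
          apply integral_congr_ae
          filter_upwards with z
          ring
      _ = (∫ z in Omega l, (q z * u z ^ 2 - p z * u z ^ 2))
            - ∫ z in Omega l, (t * q z - t * p z) := integral_sub hfg hhk
      _ = ((∫ z in Omega l, q z * u z ^ 2) - (∫ z in Omega l, p z * u z ^ 2))
            - ((∫ z in Omega l, t * q z) - ∫ z in Omega l, t * p z) := by
          rw [integral_sub h1 h2,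
            integral_sub (hqint.const_mul t) (hpint.const_mul t)]
      _ = ((∫ z in Omega l, q z * u z ^ 2) - (∫ z in Omega l, p z * u z ^ 2))
            - ((t * ∫ z in Omega l, q z) - t * ∫ z in Omega l, p z) := by
          rw [integral_const_mul, integral_const_mul]
  have e2 : (t * ∫ z in Omega l, q z) = t * ∫ z in Omega l, p z := by
    rw [hqintegral, hpintegral]
  rw [show (fun z => (if z ∈ S then α else β) * u z ^ 2)
      = fun z => q z * u z ^ 2 from rfl]
  linarith [hkey, hexpand, e2]
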